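/- Let 1 ≤ p < ∞, k ≥ 1, and μ ∈ M^p. Then the distortion function R_{k,p} : Ω̄^k → ℝ, c ↦ (Σ_{j=1}^{k+1} ∫_{V_j(c)} ‖x − c_j‖^p dμ(x))^{1/p}, is continuous on Ω̄^k. -/

import Mathlib

open MeasureTheory ENNReal Set

noncomputable section

abbrev E2 := EuclideanSpace ℝ (Fin 2)

/-- The open half-plane `Ω` above the diagonal. -/
def Omega : Set E2 := {x | x 0 < x 1}

/-- The diagonal `∂Ω`. -/
def diagSet : Set E2 := {x | x 0 = x 1}

/-- `Ω̄ = Ω ∪ ∂Ω`. -/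
def OmegaBar : Set E2 := Omega ∪ diagSet

/-- Euclidean distance of a point to the diagonal. -/
def dDiag (x : E2) : ℝ := Metric.infDist x diagSet

/-- Total persistence `Pers_p(μ) = ∫_Ω ‖x-∂Ω‖^p dμ(x)`. -/
def Pers (p : ℝ) (μ : Measure E2) : ℝ≥0∞ :=
  ∫⁻ x in Omega, ENNReal.ofReal (dDiag x ^ p) ∂μ

/-- Admissible partial transport plans: measures on `Ω̄ × Ω̄` whose first (resp. second)
marginal coincides with `μ` (resp. `ν`) on `Ω`. -/
def Adm (μ ν : Measure E2) : Set (Measure (E2 × E2)) :=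
  {π | (π.map Prod.fst).restrict Omega = μ.restrict Omega ∧
       (π.map Prod.snd).restrict Omega = ν.restrict Omega ∧
       π ((OmegaBar ×ˢ OmegaBar)ᶜ) = 0}

/-- `OT_p(μ,ν)^p`, the optimal partial transport cost. -/
def OTpow (p : ℝ) (μ ν : Measure E2) : ℝ≥0∞ :=
  ⨅ π ∈ Adm μ ν, ∫⁻ z, ENNReal.ofReal (dist z.1 z.2 ^ p) ∂π

/-- The distance `OT_p(μ,ν)`. -/
def OTp (p : ℝ) (μ ν : Measure E2) : ℝ≥0∞ := (OTpow p μ ν) ^ (1/p)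

/-- The closed ℓ¹-ball `A_L` of radius `L/√2` centered at `(-L/√8, L/√8)`. -/
def ballA (L : ℝ) : Set E2 :=
  {x | |x 0 + L / Real.sqrt 8| + |x 1 - L / Real.sqrt 8| ≤ L / Real.sqrt 2}

/-- Membership in `M^q_{L,M}`: supported in `Ω`, in `A_L`, with `Pers_q ≤ M`. -/
def MemMq (q L M : ℝ) (μ : Measure E2) : Prop :=
  μ Omegaᶜ = 0 ∧ μ (ballA L)ᶜ = 0 ∧ Pers q μ ≤ ENNReal.ofReal M

/-- Empirical EPD `μ̄_n = (1/n)(μ₁ + ⋯ + μ_n)` of a sample of `n` persistence measures. -/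
def empEPD (n : ℕ) (ω : Fin n → Measure E2) : Measure E2 :=
  (n : ℝ≥0∞)⁻¹ • ∑ i : Fin n, ω i

/-- Distance from `x` to the `j`-th centroid, the last index standing for the diagonal. -/
def cdistC (k : ℕ) (c : Fin k → E2) (j : Fin (k+1)) (x : E2) : ℝ :=
  if h : (j : ℕ) < k then dist x (c ⟨j, h⟩) else dDiag x

/-- Voronoi cells `V_j(c)` (the last cell being the diagonal cell `V_{k+1}`). -/
def Vcell (k : ℕ) (c : Fin k → E2) (j : Fin (k+1)) : Set E2 :=
  {x ∈ Omega | (∀ j' : Fin (k+1), j' < j → cdistC k c j x ≤ cdistC k c j' x) ∧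
               (∀ j' : Fin (k+1), j < j' → cdistC k c j x < cdistC k c j' x)}

/-- The distortion `R_{k,p}(c)`. -/
def distortion (p : ℝ) (μ : Measure E2) (k : ℕ) (c : Fin k → E2) : ℝ≥0∞ :=
  (∑ j : Fin (k+1), ∫⁻ x in Vcell k c j, ENNReal.ofReal (cdistC k c j x ^ p) ∂μ) ^ (1/p)

/-- The optimal distortion `R_k^* = inf {R_{k,p}(c) : c ∈ Ω̄^k}`. -/
def Rstar (p : ℝ) (μ : Measure E2) (k : ℕ) : ℝ≥0∞ :=
  ⨅ (c : Fin k → E2) (_ : ∀ j, c j ∈ OmegaBar), distortion p μ k c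

/-- The set `C_k` of optimal codebooks. -/
def Copt (p : ℝ) (μ : Measure E2) (k : ℕ) : Set (Fin k → E2) :=
  {c | (∀ j, c j ∈ OmegaBar) ∧ distortion p μ k c = Rstar p μ k}

/-- Support of a measure. -/
def msupport (μ : Measure E2) : Set E2 :=
  {x | ∀ U : Set E2, IsOpen U → x ∈ U → 0 < μ U}

/-- Euclidean distance between codebooks seen as vectors of `ℝ^{2k}`. -/
def cbDist (k : ℕ) (c c' : Fin k → E2) : ℝ :=
  Real.sqrt (∑ j : Fin k, dist (c j) (c' j) ^ 2)

/-- Euclidean norm on `(ℝ²)^k`. -/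
def pnorm2 (k : ℕ) (v : Fin k → E2) : ℝ := Real.sqrt (∑ j : Fin k, ‖v j‖ ^ 2)

/-- Distance between the `j`-th and `j'`-th centroids, the last index standing
for the diagonal. -/
def cdistPt (k : ℕ) (c : Fin k → E2) (j j' : Fin (k+1)) : ℝ :=
  if h : (j : ℕ) < k then
    (if h' : (j' : ℕ) < k then dist (c ⟨j, h⟩) (c ⟨j', h'⟩) else dDiag (c ⟨j, h⟩))
  else (if h' : (j' : ℕ) < k then dDiag (c ⟨j', h'⟩) else 0)

/-- The set `N(c)` of points lying on a boundary between two Voronoi cells. -/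
def Nset (k : ℕ) (c : Fin k → E2) : Set E2 :=
  {x ∈ Omega | ∃ j j' : Fin (k+1), j < j' ∧ x ∈ Vcell k c j ∧ cdistC k c j x = cdistC k c j' x}

/-- The `t`-neighborhood `A^t` of `A` in `Ω`. -/
def tN (A : Set E2) (t : ℝ) : Set E2 := {x ∈ Omega | ∃ a ∈ A, dist x a ≤ t}

/-- `w₂(c, m)_j = ∫_{V_j(c)} x dm(x)`. -/
def w2 (k : ℕ) (c : Fin k → E2) (m : Measure E2) (j : Fin k) : E2 :=
  ∫ x in Vcell k c j.castSucc, x ∂m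

/-- Absolute difference in `ℝ≥0∞`. -/
def eabs (a b : ℝ≥0∞) : ℝ≥0∞ := (a - b) + (b - a)

/-!
Every point of `Ω` lies in exactly one Voronoi cell, and on `V_j(c)` the integrand
`‖x - c_j‖` is the distance from `x` to the nearest of `c₁, …, c_k, ∂Ω`. Hence
`R_{k,p}(c)^p = ∫_Ω min_j ‖x - c_j‖^p dμ(x)`, whose integrand is continuous in `c` and bounded
by `‖x - ∂Ω‖^p`, a `μ`-integrable function since `Pers_p(μ) < ∞`. Dominated convergence then
gives continuity of `R_{k,p}` on all of `(ℝ²)^k`.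
-/

-- The witness is the last minimiser of `f`, matching the tie-breaking rule of `Vcell`.
lemma exists_lex_argmin {ι β : Type*} [Finite ι] [Nonempty ι] [LinearOrder ι] [LinearOrder β]
    (f : ι → β) : ∃ j, (∀ j' < j, f j ≤ f j') ∧ ∀ j', j < j' → f j < f j' := by
  obtain ⟨j, hj⟩ := Finite.exists_min fun j => toLex (f j, OrderDual.toDual j)
  refine ⟨j, fun j' _ => ?_, fun j' hjj' => ?_⟩
  · rcases Prod.Lex.toLex_le_toLex.1 (hj j') with h | ⟨h, -⟩ <;> exact h.le
  · rcases Prod.Lex.toLex_le_toLex.1 (hj j') with h | ⟨-, h⟩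
    · exact h
    · exact absurd hjj' (not_lt.2 h)

lemma continuous_lintegral_of_dominated {X α : Type*} [TopologicalSpace X]
    [FirstCountableTopology X] [TopologicalSpace α] [MeasurableSpace α] [OpensMeasurableSpace α]
    {μ : Measure α} {F : X → α → ℝ≥0∞} (bound : α → ℝ≥0∞) (hF : Continuous (Function.uncurry F))
    (h_bound : ∀ c a, F c a ≤ bound a) (h_fin : ∫⁻ a, bound a ∂μ ≠ ∞) :
    Continuous fun c => ∫⁻ a, F c a ∂μ :=
  continuous_iff_continuousAt.2 fun c =>
    tendsto_lintegral_filter_of_dominated_convergence bound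
      (.of_forall fun c => (hF.comp (Continuous.prodMk_right c)).measurable)
      (.of_forall fun c => .of_forall (h_bound c)) h_fin
      (.of_forall fun a => (hF.comp (Continuous.prodMk_left a)).tendsto c)

lemma isOpen_Omega : IsOpen Omega :=
  isOpen_lt (PiLp.continuous_apply 2 _ 0) (PiLp.continuous_apply 2 _ 1)

section Voronoi

variable {k : ℕ}

lemma cdistC_nonneg (c : Fin k → E2) (j : Fin (k+1)) (x : E2) : 0 ≤ cdistC k c j x := by
  unfold cdistC
  split
  · exact dist_nonneg
  · exact Metric.infDist_nonneg

lemma continuous_cdistC (j : Fin (k+1)) :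
    Continuous fun q : (Fin k → E2) × E2 => cdistC k q.1 j q.2 := by
  unfold cdistC
  split
  · exact continuous_snd.dist ((continuous_apply _).comp continuous_fst)
  · exact (Metric.continuous_infDist_pt _).comp continuous_snd

lemma measurableSet_Vcell (c : Fin k → E2) (j : Fin (k+1)) : MeasurableSet (Vcell k c j) := by
  have hd : ∀ i, Measurable (cdistC k c i) := fun i =>
    ((continuous_cdistC i).comp (continuous_const.prodMk continuous_id)).measurable
  have hV : Vcell k c j = Omega ∩
      ((⋂ j' ∈ {j' | j' < j}, {x | cdistC k c j x ≤ cdistC k c j' x}) ∩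
       (⋂ j' ∈ {j' | j < j'}, {x | cdistC k c j x < cdistC k c j' x})) := by
    ext x
    simp only [Vcell, mem_ofPred_eq, mem_inter_iff, mem_iInter]
  rw [hV]
  exact isOpen_Omega.measurableSet.inter <|
    (MeasurableSet.biInter (to_countable _) fun j' _ => measurableSet_le (hd j) (hd j')).inter
    (MeasurableSet.biInter (to_countable _) fun j' _ => measurableSet_lt (hd j) (hd j'))

lemma pairwise_disjoint_Vcell (c : Fin k → E2) :
    Pairwise (Function.onFun Disjoint (Vcell k c)) := by
  refine pairwise_disjoint_on (Vcell k c) |>.2 fun i j hij => disjoint_left.2 ?_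
  rintro x ⟨-, -, hi⟩ ⟨-, hj, -⟩
  exact (hi j hij).not_ge (hj i hij)

lemma iUnion_Vcell (c : Fin k → E2) : ⋃ j, Vcell k c j = Omega := by
  refine (iUnion_subset fun j x hx => hx.1).antisymm fun x hx => ?_
  obtain ⟨j, hj⟩ := exists_lex_argmin fun j => cdistC k c j x
  exact mem_iUnion.2 ⟨j, hx, hj⟩

def nearestDist (k : ℕ) (c : Fin k → E2) (x : E2) : ℝ :=
  Finset.univ.inf' Finset.univ_nonempty fun j : Fin (k+1) => cdistC k c j x

lemma nearestDist_nonneg (c : Fin k → E2) (x : E2) : 0 ≤ nearestDist k c x :=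
  Finset.le_inf' _ _ fun j _ => cdistC_nonneg c j x

lemma nearestDist_le_dDiag (c : Fin k → E2) (x : E2) : nearestDist k c x ≤ dDiag x := by
  have h := Finset.inf'_le (fun j => cdistC k c j x) (Finset.mem_univ (Fin.last k))
  rwa [cdistC, dif_neg (by simp)] at h

lemma continuous_nearestDist :
    Continuous fun q : (Fin k → E2) × E2 => nearestDist k q.1 q.2 :=
  Continuous.finset_inf'_apply Finset.univ_nonempty fun j _ => continuous_cdistC j

lemma cdistC_eq_nearestDist_of_mem_Vcell {c : Fin k → E2} {j : Fin (k+1)} {x : E2}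
    (hx : x ∈ Vcell k c j) : cdistC k c j x = nearestDist k c x := by
  obtain ⟨-, hlt, hgt⟩ := hx
  refine le_antisymm (Finset.le_inf' _ _ fun j' _ => ?_) (Finset.inf'_le _ (Finset.mem_univ j))
  rcases lt_trichotomy j' j with h | rfl | h
  · exact hlt j' h
  · exact le_rfl
  · exact (hgt j' h).le

lemma distortion_eq_lintegral_nearestDist (p : ℝ) (μ : Measure E2) (c : Fin k → E2) :
    distortion p μ k c = (∫⁻ x in Omega, ENNReal.ofReal (nearestDist k c x ^ p) ∂μ) ^ (1 / p) := by
  have hcell : ∀ j, ∫⁻ x in Vcell k c j, ENNReal.ofReal (cdistC k c j x ^ p) ∂μ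
      = ∫⁻ x in Vcell k c j, ENNReal.ofReal (nearestDist k c x ^ p) ∂μ := fun j =>
    setLIntegral_congr_fun (measurableSet_Vcell c j) fun x hx => by
      rw [cdistC_eq_nearestDist_of_mem_Vcell hx]
  rw [distortion, ← iUnion_Vcell c,
    lintegral_iUnion (measurableSet_Vcell c) (pairwise_disjoint_Vcell c), tsum_fintype]
  simp only [hcell]

end Voronoi

theorem statement8_general (p : ℝ) (hp : 1 ≤ p) (k : ℕ) (μ : Measure E2)
    (hμp : Pers p μ < ⊤) :
    ContinuousOn (distortion p μ k) {c : Fin k → E2 | ∀ j, c j ∈ OmegaBar} := by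
  have hp0 : 0 ≤ p := zero_le_one.trans hp
  have hpow : Continuous fun q : (Fin k → E2) × E2 =>
      ENNReal.ofReal (nearestDist k q.1 q.2 ^ p) :=
    ENNReal.continuous_ofReal.comp ((Real.continuous_rpow_const hp0).comp continuous_nearestDist)
  have hintegral : Continuous fun c : Fin k → E2 =>
      ∫⁻ x in Omega, ENNReal.ofReal (nearestDist k c x ^ p) ∂μ :=
    continuous_lintegral_of_dominated (fun x => ENNReal.ofReal (dDiag x ^ p)) hpow
      (fun c x => ENNReal.ofReal_le_ofReal <|
        Real.rpow_le_rpow (nearestDist_nonneg c x) (nearestDist_le_dDiag c x) hp0)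
      hμp.ne
  rw [funext (distortion_eq_lintegral_nearestDist p μ)]
  exact (ENNReal.continuous_rpow_const.comp hintegral).continuousOn

/-- Lemma: continuity of the distortion `R_{k,p}` on `Ω̄^k`. -/
theorem statement8 (p : ℝ) (hp : 1 ≤ p) (k : ℕ) (hk : 1 ≤ k) (μ : Measure E2)
    (hμΩ : μ Omegaᶜ = 0) (hμp : Pers p μ < ⊤) :
    ContinuousOn (distortion p μ k) {c : Fin k → E2 | ∀ j, c j ∈ OmegaBar} :=
  statement8_general p hp k μ hμp
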